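/- arXiv:1111.0952 — 2 statements merged into one kernel-verified Lean document; each statement's English description precedes it below -/
import Mathlib

section
/- Let M = A·W where A is a nonnegative n×r real matrix whose rows each have ℓ1 norm 1, W is a nonnegative r×m real matrix, and A is separable with witness f : {1,…,r} → {1,…,n}, meaning that for each i the row A^{f(i)} has its only nonzero entry in column i. Let ε ≥ 0, α > 0, set d = 5ε/α + 2ε, and let M' be an n×m real matrix with ‖M'^j − M^j‖₁ ≤ ε for every j. Call a row M'^j a robust-loner if the ℓ1 distance from M'^j to the convex hull of the rows { M'^{j'} : ‖M'^{j'} − M'^j‖₁ ≥ d } is strictly greater than 2ε. Then for any j ∈ {1,…,n}: if ‖M'^j − W^i‖₁ > d + ε for every i ∈ {1,…,r}, then M'^j is not a robust-loner. -/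
/-! Separability makes the row `M^{f(i)}` equal to `W^i`, so `M^j = ∑ᵢ A_{ji} M^{f(i)}` is a
convex combination of these rows. The same combination `y` of the perturbed rows `M'^{f(i)}` is
within `ε` of `M^j`, hence within `2ε` of `M'^j`. Each `M'^{f(i)}` is within `ε` of `W^i`, hence at
distance at least `d` from `M'^j`, so `y` lies in the convex hull in question. -/

open Matrix

/-- The `ℓ1` norm of a vector: the sum of the absolute values of its entries. -/
def l1norm {m : ℕ} (x : Fin m → ℝ) : ℝ := ∑ l, |x l|

section L1

variable {m : ℕ}

theorem l1norm_eq_norm_toLp (x : Fin m → ℝ) : l1norm x = ‖WithLp.toLp 1 x‖ := by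
  simp [l1norm, PiLp.norm_eq_of_L1]

theorem l1norm_sub_comm (x y : Fin m → ℝ) : l1norm (x - y) = l1norm (y - x) := by
  simp only [l1norm_eq_norm_toLp, WithLp.toLp_sub, norm_sub_rev]

theorem l1norm_sub_le_add (x y z : Fin m → ℝ) :
    l1norm (x - z) ≤ l1norm (x - y) + l1norm (y - z) := by
  simp only [l1norm_eq_norm_toLp, WithLp.toLp_sub]
  exact norm_sub_le_norm_sub_add_norm_sub _ _ _

theorem l1norm_sum_smul_le {ι : Type*} [Fintype ι] {w : ι → ℝ} (hw : ∀ i, 0 ≤ w i)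
    (x : ι → Fin m → ℝ) : l1norm (∑ i, w i • x i) ≤ ∑ i, w i * l1norm (x i) := by
  simp only [l1norm_eq_norm_toLp, WithLp.toLp_sum, WithLp.toLp_smul]
  refine (norm_sum_le _ _).trans_eq (Finset.sum_congr rfl fun i _ => ?_)
  rw [norm_smul, Real.norm_of_nonneg (hw i)]

theorem l1norm_sum_smul_sub_sum_smul_le {ι : Type*} [Fintype ι] {w : ι → ℝ}
    (hw : ∀ i, 0 ≤ w i) (hw1 : ∑ i, w i = 1) {x y : ι → Fin m → ℝ} {ε : ℝ}
    (hxy : ∀ i, l1norm (x i - y i) ≤ ε) :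
    l1norm (∑ i, w i • x i - ∑ i, w i • y i) ≤ ε := by
  calc l1norm (∑ i, w i • x i - ∑ i, w i • y i)
      = l1norm (∑ i, w i • (x i - y i)) := by simp only [smul_sub, Finset.sum_sub_distrib]
    _ ≤ ∑ i, w i * l1norm (x i - y i) := l1norm_sum_smul_le hw _
    _ ≤ ∑ i, w i * ε := Finset.sum_le_sum fun i _ => mul_le_mul_of_nonneg_left (hxy i) (hw i)
    _ = ε := by rw [← Finset.sum_mul, hw1, one_mul]

end L1

section Separable

variable {ι κ : Type*} [Fintype κ] [DecidableEq κ]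

theorem eq_single_one_of_abs_sum_eq_one {a : κ → ℝ} (ha : ∀ t, 0 ≤ a t)
    (hsum : ∑ t, |a t| = 1) {i : κ} (hzero : ∀ t, t ≠ i → a t = 0) : a = Pi.single i 1 := by
  have hai : a i = 1 := by
    rwa [Finset.sum_eq_single_of_mem i (Finset.mem_univ i)
      (fun t _ ht => by rw [hzero t ht, abs_zero]), abs_of_nonneg (ha i)] at hsum
  ext t
  by_cases ht : t = i
  · subst ht; simp [hai]
  · simp [hzero t ht, ht]

theorem mul_row_eq_of_abs_sum_eq_one {o : Type*} {A : Matrix ι κ ℝ} (W : Matrix κ o ℝ)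
    {k : ι} {i : κ} (hA : ∀ t, 0 ≤ A k t) (hsum : ∑ t, |A k t| = 1)
    (hzero : ∀ t, t ≠ i → A k t = 0) : (A * W) k = W i := by
  rw [mul_apply_eq_vecMul, eq_single_one_of_abs_sum_eq_one hA hsum hzero, single_vecMul,
    one_smul, row]

end Separable

theorem stmt13_general {n m r : ℕ} (M : Matrix (Fin n) (Fin m) ℝ)
    (A : Matrix (Fin n) (Fin r) ℝ) (W : Matrix (Fin r) (Fin m) ℝ)
    (hA : ∀ i j, 0 ≤ A i j) (hArow : ∀ j : Fin n, ∑ t, |A j t| = 1)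
    (hfac : M = A * W)
    (f : Fin r → Fin n)
    (hwit : ∀ i : Fin r, A (f i) i ≠ 0 ∧ ∀ i' : Fin r, i' ≠ i → A (f i) i' = 0)
    (ε α : ℝ)
    (M' : Matrix (Fin n) (Fin m) ℝ)
    (hM' : ∀ j : Fin n, l1norm (M' j - M j) ≤ ε)
    (j : Fin n)
    (hfar : ∀ i : Fin r, (5 * ε / α + 2 * ε) + ε < l1norm (M' j - W i)) :
    ¬ (∀ y ∈ convexHull ℝ (M' '' {j' | 5 * ε / α + 2 * ε ≤ l1norm (M' j' - M' j)}),
        2 * ε < l1norm (M' j - y)) := by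
  intro hloner
  subst hfac
  have hMf : ∀ i, (A * W) (f i) = W i := fun i =>
    mul_row_eq_of_abs_sum_eq_one W (hA _) (hArow _) (hwit i).2
  have hAj : ∑ i, A j i = 1 := by simpa only [abs_of_nonneg (hA j _)] using hArow j
  have hfar_f : ∀ i, 5 * ε / α + 2 * ε ≤ l1norm (M' (f i) - M' j) := fun i => by
    have htri := l1norm_sub_le_add (M' j) (M' (f i)) (W i)
    have hclose := hM' (f i)
    rw [l1norm_sub_comm (M' j) (M' (f i))] at htri
    rw [hMf i] at hclose
    linarith [hfar i]
  set y := ∑ i, A j i • M' (f i)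
  have hy : y ∈ convexHull ℝ (M' '' {j' | 5 * ε / α + 2 * ε ≤ l1norm (M' j' - M' j)}) :=
    (convex_convexHull ℝ _).sum_mem (fun i _ => hA j i) hAj
      fun i _ => subset_convexHull ℝ _ ⟨f i, hfar_f i, rfl⟩
  have hMy : l1norm ((A * W) j - y) ≤ ε := by
    have hrow : (A * W) j = ∑ i, A j i • (A * W) (f i) := by
      simp only [hMf, mul_apply_eq_vecMul, vecMul_eq_sum]
    rw [hrow, l1norm_sub_comm]
    exact l1norm_sum_smul_sub_sum_smul_le (hA j) hAj fun i => hM' (f i)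
  linarith [hloner y hy, l1norm_sub_le_add (M' j) ((A * W) j) y, hM' j]

/-- With `M = A * W` (`A` nonnegative, unit `ℓ1`-norm rows, separable
with witness `f`, `W` nonnegative), `ε ≥ 0`, `α > 0`, `d = 5ε/α + 2ε` and `M'` a row-ℓ1
`ε`-perturbation of `M`: a row `M'^j` whose `ℓ1` distance to each row `W^i` exceeds
`d + ε` is not a robust-loner, i.e. it is not at `ℓ1` distance greater than `2ε` from the
convex hull of the rows of `M'` at `ℓ1` distance at least `d` from `M'^j`. -/
theorem stmt13 {n m r : ℕ} (M : Matrix (Fin n) (Fin m) ℝ)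
    (A : Matrix (Fin n) (Fin r) ℝ) (W : Matrix (Fin r) (Fin m) ℝ)
    (hA : ∀ i j, 0 ≤ A i j) (hArow : ∀ j : Fin n, ∑ t, |A j t| = 1)
    (hW : ∀ i j, 0 ≤ W i j) (hfac : M = A * W)
    (f : Fin r → Fin n)
    (hwit : ∀ i : Fin r, A (f i) i ≠ 0 ∧ ∀ i' : Fin r, i' ≠ i → A (f i) i' = 0)
    (ε α : ℝ) (hε : 0 ≤ ε) (hα : 0 < α)
    (M' : Matrix (Fin n) (Fin m) ℝ)
    (hM' : ∀ j : Fin n, l1norm (M' j - M j) ≤ ε)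
    (j : Fin n)
    (hfar : ∀ i : Fin r, (5 * ε / α + 2 * ε) + ε < l1norm (M' j - W i)) :
    ¬ (∀ y ∈ convexHull ℝ (M' '' {j' | 5 * ε / α + 2 * ε ≤ l1norm (M' j' - M' j)}),
        2 * ε < l1norm (M' j - y)) :=
  stmt13_general M A W hA hArow hfac f hwit ε α M' hM' j hfar
end

section
/- Let M be an n×m real matrix, W an r×m real matrix with ‖W‖_F ≤ √r, and let ε ≥ 0, δ ≥ 0. Suppose A = Σ_{t=1}^r σ_t·u_t·v_tᵀ where (u_1,…,u_r) is an orthonormal family in ℝ^n, (v_1,…,v_r) is an orthonormal family in ℝ^r, and σ_t ≥ 0 for all t. Assume ‖M − A·W‖_F ≤ ε·‖M‖_F. Let T = { t ∈ {1,…,r} : σ_t ≥ δ·‖M‖_F } and define W₀ = (Σ_{t∈T} v_t·v_tᵀ)·W. Then ‖M − A·W₀‖_F ≤ (ε + δ·√r)·‖M‖_F. -/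
/-!
Because the `v t` are orthonormal, `A * ∑ t ∈ T, vecMulVec (v t) (v t)` keeps exactly the terms
of `A` indexed by `T`, so `A W - A W₀ = ∑ t ∉ T, σ t • u t (v tᵀ W)`. Orthonormality of the `u t`
makes its squared Frobenius norm `∑ t ∉ T, σ t ^ 2 ‖v tᵀ W‖²`, which is at most
`(δ ‖M‖_F)² ‖W‖_F² ≤ (δ ‖M‖_F)² r` by Bessel's inequality on the columns of `W`. The triangle
inequality through `A W` finishes.
-/

open Matrix

noncomputable def frobNorm {n m : ℕ} (M : Matrix (Fin n) (Fin m) ℝ) : ℝ :=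
  Real.sqrt (∑ i, ∑ j, (M i j) ^ 2)

open Finset

section Orthonormal

variable {ι κ : Type*} [Fintype κ] [DecidableEq ι] {u : ι → κ → ℝ}

lemma orthonormal_toLp_of_dotProduct (hu : ∀ s t, u s ⬝ᵥ u t = if s = t then 1 else 0) :
    Orthonormal ℝ (fun t => WithLp.toLp 2 (u t) : ι → EuclideanSpace ℝ κ) := by
  rw [orthonormal_iff_ite]
  intro s t
  simp [← hu s t, EuclideanSpace.inner_eq_star_dotProduct, dotProduct_comm]

lemma sum_sq_sum_mul_of_orthonormal (hu : ∀ s t, u s ⬝ᵥ u t = if s = t then 1 else 0)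
    (S : Finset ι) (c : ι → ℝ) :
    ∑ i, (∑ t ∈ S, c t * u t i) ^ 2 = ∑ t ∈ S, c t ^ 2 := by
  have h := (orthonormal_toLp_of_dotProduct hu).inner_sum c c S
  rw [real_inner_self_eq_norm_sq, EuclideanSpace.norm_sq_eq] at h
  simpa [sq] using h

lemma sum_sq_dotProduct_le (hu : ∀ s t, u s ⬝ᵥ u t = if s = t then 1 else 0)
    (S : Finset ι) (y : κ → ℝ) :
    ∑ t ∈ S, (u t ⬝ᵥ y) ^ 2 ≤ ∑ i, y i ^ 2 := by
  have h := (orthonormal_toLp_of_dotProduct hu).sum_inner_products_le (WithLp.toLp 2 y) (s := S)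
  simpa [EuclideanSpace.norm_sq_eq, EuclideanSpace.inner_eq_star_dotProduct, dotProduct_comm]
    using h

end Orthonormal

section Frobenius

variable {n m : ℕ}

attribute [local instance] Matrix.frobeniusNormedAddCommGroup

lemma frobNorm_nonneg (M : Matrix (Fin n) (Fin m) ℝ) : 0 ≤ frobNorm M :=
  Real.sqrt_nonneg _

lemma sq_frobNorm (M : Matrix (Fin n) (Fin m) ℝ) : frobNorm M ^ 2 = ∑ i, ∑ j, M i j ^ 2 :=
  Real.sq_sqrt (by positivity)

lemma frobNorm_eq_norm (M : Matrix (Fin n) (Fin m) ℝ) : frobNorm M = ‖M‖ := by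
  simp [frobNorm, frobenius_norm_def, Real.sqrt_eq_rpow]

lemma frobNorm_add_le (X Y : Matrix (Fin n) (Fin m) ℝ) :
    frobNorm (X + Y) ≤ frobNorm X + frobNorm Y := by
  simpa only [frobNorm_eq_norm] using norm_add_le X Y

end Frobenius

section RankOne

variable {R ι l p q : Type*} [CommSemiring R] [Fintype p]

lemma sum_smul_vecMulVec_mul (S : Finset ι) (σ : ι → R) (u : ι → l → R) (v : ι → p → R)
    (W : Matrix p q R) :
    (∑ t ∈ S, σ t • vecMulVec (u t) (v t)) * W = ∑ t ∈ S, σ t • vecMulVec (u t) (v t ᵥ* W) := by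
  simp only [Matrix.sum_mul, Matrix.smul_mul, vecMulVec_mul]

variable [Fintype ι] [DecidableEq ι] {v : ι → p → R}

lemma sum_smul_vecMulVec_mulVec (hv : ∀ s t, v s ⬝ᵥ v t = if s = t then 1 else 0)
    (σ : ι → R) (u : ι → l → R) (t : ι) :
    (∑ s, σ s • vecMulVec (u s) (v s)) *ᵥ v t = σ t • u t := by
  simp [Matrix.sum_mulVec, Matrix.smul_mulVec, vecMulVec_mulVec, hv]

lemma sum_smul_vecMulVec_mul_sum_vecMulVec_self
    (hv : ∀ s t, v s ⬝ᵥ v t = if s = t then 1 else 0) (σ : ι → R) (u : ι → l → R)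
    (S : Finset ι) :
    (∑ t, σ t • vecMulVec (u t) (v t)) * ∑ t ∈ S, vecMulVec (v t) (v t)
      = ∑ t ∈ S, σ t • vecMulVec (u t) (v t) := by
  simp only [Matrix.mul_sum, mul_vecMulVec, sum_smul_vecMulVec_mulVec hv, smul_vecMulVec]

end RankOne

section Truncation

variable {ι : Type*} [DecidableEq ι] {n k m : ℕ} {u : ι → Fin n → ℝ} {v : ι → Fin k → ℝ}

lemma sq_frobNorm_sum_smul_vecMulVec (hu : ∀ s t, u s ⬝ᵥ u t = if s = t then 1 else 0)
    (S : Finset ι) (σ : ι → ℝ) (y : ι → Fin m → ℝ) :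
    frobNorm (∑ t ∈ S, σ t • vecMulVec (u t) (y t)) ^ 2 = ∑ t ∈ S, σ t ^ 2 * ∑ j, y t j ^ 2 := by
  have hcol : ∀ j, ∑ i, (∑ t ∈ S, σ t • vecMulVec (u t) (y t)) i j ^ 2
      = ∑ t ∈ S, (σ t * y t j) ^ 2 := fun j => by
    simp only [Matrix.sum_apply, Matrix.smul_apply, vecMulVec_apply, smul_eq_mul]
    simpa only [mul_comm, mul_left_comm]
      using sum_sq_sum_mul_of_orthonormal hu S (fun t => σ t * y t j)
  rw [sq_frobNorm, sum_comm]
  simp only [hcol, mul_pow, mul_sum]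
  exact sum_comm

lemma frobNorm_sum_smul_vecMulVec_vecMul_le (hu : ∀ s t, u s ⬝ᵥ u t = if s = t then 1 else 0)
    (hv : ∀ s t, v s ⬝ᵥ v t = if s = t then 1 else 0) {S : Finset ι} {σ : ι → ℝ} {c : ℝ}
    (hc : 0 ≤ c) (hσ : ∀ t ∈ S, |σ t| ≤ c) (W : Matrix (Fin k) (Fin m) ℝ) :
    frobNorm (∑ t ∈ S, σ t • vecMulVec (u t) (v t ᵥ* W)) ≤ c * frobNorm W := by
  refine (pow_le_pow_iff_left₀ (frobNorm_nonneg _) (mul_nonneg hc (frobNorm_nonneg W))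
    two_ne_zero).mp ?_
  rw [sq_frobNorm_sum_smul_vecMulVec hu, mul_pow, sq_frobNorm]
  calc ∑ t ∈ S, σ t ^ 2 * ∑ j, (v t ᵥ* W) j ^ 2
      ≤ ∑ t ∈ S, c ^ 2 * ∑ j, (v t ᵥ* W) j ^ 2 := by
        gcongr ∑ t ∈ S, ?_ * _ with t ht
        obtain ⟨hlo, hhi⟩ := abs_le.mp (hσ t ht)
        exact sq_le_sq' hlo hhi
    _ = c ^ 2 * ∑ j, ∑ t ∈ S, (v t ⬝ᵥ Wᵀ j) ^ 2 := by
        rw [← mul_sum, sum_comm]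
        rfl
    _ ≤ c ^ 2 * ∑ j, ∑ i, W i j ^ 2 := by
        gcongr with j
        exact sum_sq_dotProduct_le hv S (Wᵀ j)
    _ = c ^ 2 * ∑ i, ∑ j, W i j ^ 2 := by rw [sum_comm]

end Truncation

theorem stmt18_general {n m r : ℕ} (M : Matrix (Fin n) (Fin m) ℝ)
    (W : Matrix (Fin r) (Fin m) ℝ) (hWF : frobNorm W ≤ Real.sqrt r)
    (ε δ : ℝ) (hδ : 0 ≤ δ)
    (σ : Fin r → ℝ) (u : Fin r → Fin n → ℝ) (v : Fin r → Fin r → ℝ)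
    (hu : ∀ s t : Fin r, ∑ i, u s i * u t i = if s = t then 1 else 0)
    (hv : ∀ s t : Fin r, ∑ i, v s i * v t i = if s = t then 1 else 0)
    (hσ : ∀ t, 0 ≤ σ t)
    (A : Matrix (Fin n) (Fin r) ℝ)
    (hA : A = ∑ t, σ t • Matrix.vecMulVec (u t) (v t))
    (happrox : frobNorm (M - A * W) ≤ ε * frobNorm M)
    (T : Finset (Fin r)) (hT : ∀ t, t ∈ T ↔ δ * frobNorm M ≤ σ t)
    (W₀ : Matrix (Fin r) (Fin m) ℝ)
    (hW₀ : W₀ = (∑ t ∈ T, Matrix.vecMulVec (v t) (v t)) * W) :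
    frobNorm (M - A * W₀) ≤ (ε + δ * Real.sqrt r) * frobNorm M := by
  have hdiff : A * W - A * W₀ = ∑ t ∈ Tᶜ, σ t • vecMulVec (u t) (v t ᵥ* W) := by
    rw [hW₀, ← Matrix.mul_assoc, hA, sum_smul_vecMulVec_mul_sum_vecMulVec_self hv,
      sum_smul_vecMulVec_mul, sum_smul_vecMulVec_mul, ← sum_compl_add_sum T, add_sub_cancel_right]
  have hsmall : ∀ t ∈ Tᶜ, |σ t| ≤ δ * frobNorm M := fun t ht => by
    rw [abs_of_nonneg (hσ t)]
    exact (not_le.mp ((hT t).not.mp (mem_compl.mp ht))).le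
  calc frobNorm (M - A * W₀)
      ≤ frobNorm (M - A * W) + frobNorm (A * W - A * W₀) := by
        simpa only [sub_add_sub_cancel] using frobNorm_add_le (M - A * W) (A * W - A * W₀)
    _ ≤ ε * frobNorm M + δ * frobNorm M * frobNorm W := by
        rw [hdiff]
        gcongr
        exact frobNorm_sum_smul_vecMulVec_vecMul_le hu hv
          (mul_nonneg hδ (frobNorm_nonneg M)) hsmall W
    _ ≤ ε * frobNorm M + δ * frobNorm M * Real.sqrt r := by
        gcongr
        exact mul_nonneg hδ (frobNorm_nonneg M)
    _ = (ε + δ * Real.sqrt r) * frobNorm M := by ring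

/-- Truncating `W` to the significant right singular directions of `A`
(those with `σ_t ≥ δ ‖M‖_F`) yields `W₀` with
`‖M - A W₀‖_F ≤ (ε + δ √r) ‖M‖_F`. -/
theorem stmt18 {n m r : ℕ} (M : Matrix (Fin n) (Fin m) ℝ)
    (W : Matrix (Fin r) (Fin m) ℝ) (hWF : frobNorm W ≤ Real.sqrt r)
    (ε δ : ℝ) (hε : 0 ≤ ε) (hδ : 0 ≤ δ)
    (σ : Fin r → ℝ) (u : Fin r → Fin n → ℝ) (v : Fin r → Fin r → ℝ)
    (hu : ∀ s t : Fin r, ∑ i, u s i * u t i = if s = t then 1 else 0)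
    (hv : ∀ s t : Fin r, ∑ i, v s i * v t i = if s = t then 1 else 0)
    (hσ : ∀ t, 0 ≤ σ t)
    (A : Matrix (Fin n) (Fin r) ℝ)
    (hA : A = ∑ t, σ t • Matrix.vecMulVec (u t) (v t))
    (happrox : frobNorm (M - A * W) ≤ ε * frobNorm M)
    (T : Finset (Fin r)) (hT : ∀ t, t ∈ T ↔ δ * frobNorm M ≤ σ t)
    (W₀ : Matrix (Fin r) (Fin m) ℝ)
    (hW₀ : W₀ = (∑ t ∈ T, Matrix.vecMulVec (v t) (v t)) * W) :
    frobNorm (M - A * W₀) ≤ (ε + δ * Real.sqrt r) * frobNorm M :=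
  stmt18_general M W hWF ε δ hδ σ u v hu hv hσ A hA happrox T hT W₀ hW₀
end
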